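/- arXiv:1206.5523 — 8 statements merged into one kernel-verified Lean document; each statement's English description precedes it below -/
import Mathlib

section
/- If T is a bounded linear operator on a complex Hilbert space H satisfying T² = 0, then T is a complex symmetric operator; that is, there exists a conjugation C on H such that T = C ∘ T* ∘ C. -/
/-!
A conjugation `C` with `C T* C = T` comes from a closed real subspace `E` on which the inner
product is real, whose complex span is dense, and which is invariant under `T + T*` and
`i (T - T*)`: then the real orthogonal complement of `E` is `i E`, and `C` is the reflection
in `E`.

When `T² = 0`, the space splits as `(ker T)ᗮ ⊕ (ker T ⊓ ker T*) ⊕ closure (range T)`, and the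
polar decomposition `T = U |T|` maps the first summand onto the third; `C` must swap these two.
By Zorn's lemma, adjoining cyclic subspaces of the self-adjoint `|T|` (on which the inner
product is real), there is a `|T|`-invariant real form `E₁` of `(ker T)ᗮ`, and a real form `E₀`
of `ker T ⊓ ker T*`. Then `E` is the closure of
`{(T + |T|) y + i (T - |T|) z + n | y, z ∈ E₁, n ∈ E₀}`.
-/

open ContinuousLinearMap

/-- A conjugation on a complex Hilbert space: a conjugate-linear, isometric involution. -/
def IsConjugation {H : Type*} [NormedAddCommGroup H] [InnerProductSpace ℂ H]
    (C : H → H) : Prop :=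
  (∀ (a : ℂ) (x y : H), C (a • x + y) = (starRingEnd ℂ a) • C x + C y) ∧
  (∀ x, ‖C x‖ = ‖x‖) ∧
  (∀ x, C (C x) = x)

open Submodule Set
open scoped Pointwise InnerProductSpace ComplexConjugate

-- Orthogonal complements and reflections of real subspaces are taken for `re ⟪x, y⟫_ℂ`.
attribute [local instance] InnerProductSpace.complexToReal

section ComplexSymmetric

variable {H : Type*} [NormedAddCommGroup H] [InnerProductSpace ℂ H]

def IsTotallyReal (s : Set H) : Prop := ∀ x ∈ s, ∀ y ∈ s, (⟪x, y⟫_ℂ).im = 0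

theorem im_inner_eq_zero_comm {x y : H} : (⟪x, y⟫_ℂ).im = 0 ↔ (⟪y, x⟫_ℂ).im = 0 := by
  rw [← inner_conj_symm, Complex.conj_im, neg_eq_zero]

theorem re_inner_I_smul_right (x y : H) : (⟪x, Complex.I • y⟫_ℂ).re = -(⟪x, y⟫_ℂ).im := by
  simp

namespace IsTotallyReal

variable {s : Set H}

theorem span (hs : IsTotallyReal s) : IsTotallyReal (Submodule.span ℝ s : Set H) := by
  have key : ∀ x, (∀ y ∈ s, (⟪x, y⟫_ℂ).im = 0) → ∀ y ∈ Submodule.span ℝ s, (⟪x, y⟫_ℂ).im = 0 :=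
    fun x hx => Submodule.span_le (p := LinearMap.ker
      (Complex.imLm.comp ((innerₛₗ ℂ x).restrictScalars ℝ))).2 hx
  exact fun x hx y hy => key x (fun z hz => im_inner_eq_zero_comm.1 <|
    key z (fun w hw => hs z hz w hw) x hx) y hy

theorem closure (hs : IsTotallyReal s) : IsTotallyReal (_root_.closure s) := by
  have hclosed : IsClosed {p : H × H | (⟪p.1, p.2⟫_ℂ).im = 0} :=
    isClosed_eq (Complex.continuous_im.comp (continuous_fst.inner continuous_snd))
      continuous_const
  have hsub : _root_.closure s ×ˢ _root_.closure s ⊆ {p : H × H | (⟪p.1, p.2⟫_ℂ).im = 0} := by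
    rw [← closure_prod_eq]
    exact closure_minimal (fun p hp => hs _ hp.1 _ hp.2) hclosed
  exact fun x hx y hy => hsub (mk_mem_prod hx hy)

theorem union_range_pow {Q : H →ₗ[ℂ] H} (hQ : Q.IsSymmetric) (hs : IsTotallyReal s)
    (hsQ : MapsTo Q s s) {w : H} (hw : ∀ e ∈ s, ⟪e, w⟫_ℂ = 0) :
    IsTotallyReal (s ∪ range fun n : ℕ => (Q ^ n) w) := by
  have hmixed : ∀ e ∈ s, ∀ n : ℕ, (⟪e, (Q ^ n) w⟫_ℂ).im = 0 := fun e he n => by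
    rw [← hQ.pow n, hw _ ((Module.End.coe_pow Q n).symm ▸ hsQ.iterate n he), Complex.zero_im]
  rintro x (hx | ⟨n, rfl⟩) y (hy | ⟨m, rfl⟩)
  · exact hs x hx y hy
  · exact hmixed x hx m
  · exact im_inner_eq_zero_comm.1 (hmixed y hy n)
  · rw [hQ.pow n, ← Module.End.mul_apply, ← pow_add]
    exact (hQ.pow (n + m)).im_inner_self_apply w

end IsTotallyReal

section RealForm

variable {E : Submodule ℝ H} [E.HasOrthogonalProjection]

theorem orthogonal_eq_I_smul (hreal : IsTotallyReal (E : Set H))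
    (htotal : ∀ w : H, (∀ e ∈ E, ⟪e, w⟫_ℂ = 0) → w = 0) :
    Eᗮ = Complex.I • E := by
  refine le_antisymm (fun c hc => ?_) ?_
  · obtain ⟨p, hp, q, hq, hpq⟩ := E.exists_add_mem_mem_orthogonal (-Complex.I • c)
    have hq0 : q = 0 := by
      refine htotal q fun e he => Complex.ext ?_ ?_
      · exact (mem_orthogonal _ _).1 hq e he
      · have hIq : Complex.I • q = c - Complex.I • p := by
          rw [eq_sub_of_add_eq' hpq.symm, smul_sub, smul_smul]; simp
        have hce : (⟪e, c⟫_ℂ).re = 0 := (mem_orthogonal _ _).1 hc e he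
        have := congrArg (fun v => (⟪e, v⟫_ℂ).re) hIq
        simp only [re_inner_I_smul_right, inner_sub_right, Complex.sub_re, hce,
          hreal e he p hp] at this
        simpa using this
    rw [hq0, add_zero] at hpq
    rw [mem_smul_pointwise_iff_exists]
    exact ⟨-Complex.I • c, hpq ▸ hp, by rw [smul_smul]; simp⟩
  · rintro _ ⟨b, hb, rfl⟩
    rw [mem_orthogonal]
    intro e he
    simp [real_inner_eq_re_inner, re_inner_I_smul_right, hreal e he b hb]

variable (hE : Eᗮ = Complex.I • E)
include hE

theorem exists_eq_add_I_smul (x : H) : ∃ e ∈ E, ∃ f ∈ E, x = e + Complex.I • f := by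
  obtain ⟨e, he, g, hg, rfl⟩ := E.exists_add_mem_mem_orthogonal x
  rw [hE, mem_smul_pointwise_iff_exists] at hg
  obtain ⟨f, hf, rfl⟩ := hg
  exact ⟨e, he, f, hf, rfl⟩

theorem reflection_I_smul (x : H) :
    E.reflection (Complex.I • x) = -(Complex.I • E.reflection x) := by
  obtain ⟨e, he, f, hf, rfl⟩ := exists_eq_add_I_smul hE x
  have hIe : Complex.I • e ∈ Eᗮ := hE ▸ smul_mem_pointwise_smul e _ E he
  have hIf : Complex.I • f ∈ Eᗮ := hE ▸ smul_mem_pointwise_smul f _ E hf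
  rw [smul_add, smul_smul, Complex.I_mul_I, neg_one_smul, map_add, map_neg, map_add,
    reflection_mem_subspace_orthogonalComplement_eq_neg hIe,
    reflection_mem_subspace_orthogonalComplement_eq_neg hIf,
    reflection_mem_subspace_eq_self he, reflection_mem_subspace_eq_self hf]
  match_scalars <;> simp

theorem reflection_smul_complex (a : ℂ) (x : H) :
    E.reflection (a • x) = conj a • E.reflection x := by
  have hdecomp : a • x = a.re • x + a.im • (Complex.I • x) := by
    rw [← Complex.coe_smul, ← Complex.coe_smul, smul_smul, ← add_smul,
      Complex.re_add_im]
  rw [hdecomp, map_add, map_smul, map_smul, reflection_I_smul hE]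
  conv_rhs => rw [← Complex.re_add_im a]
  simp only [map_add, map_mul, Complex.conj_ofReal, Complex.conj_I, add_smul, mul_smul,
    Complex.coe_smul]
  module

theorem isConjugation_reflection : IsConjugation E.reflection :=
  ⟨fun a x y => by rw [map_add, reflection_smul_complex hE], E.reflection.norm_map,
    E.reflection_reflection⟩

theorem apply_eq_reflection_adjoint_reflection [CompleteSpace H] {T : H →L[ℂ] H}
    (hX : MapsTo (T + adjoint T) E E) (hY : MapsTo (Complex.I • (T - adjoint T)) E E) (x : H) :
    T x = E.reflection (adjoint T (E.reflection x)) := by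
  have hfix : ∀ e ∈ E, E.reflection (adjoint T e) = T e := by
    intro e he
    have hX' := E.smul_mem (1 / 2 : ℝ) (hX he)
    have hY' := E.smul_mem (1 / 2 : ℝ) (hY he)
    have hsplit : adjoint T e = (1 / 2 : ℝ) • (T + adjoint T) e +
        Complex.I • (1 / 2 : ℝ) • (Complex.I • (T - adjoint T)) e := by
      simp only [add_apply, smul_apply, sub_apply, ← Complex.coe_smul]
      match_scalars <;> norm_num [Complex.ext_iff]
    rw [hsplit, map_add, reflection_I_smul hE, reflection_mem_subspace_eq_self hX',
      reflection_mem_subspace_eq_self hY']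
    simp only [add_apply, smul_apply, sub_apply, ← Complex.coe_smul]
    match_scalars <;> norm_num [Complex.ext_iff]
  obtain ⟨e, he, f, hf, rfl⟩ := exists_eq_add_I_smul hE x
  rw [map_add E.reflection, reflection_I_smul hE, reflection_mem_subspace_eq_self he,
    reflection_mem_subspace_eq_self hf, ← sub_eq_add_neg, map_sub, map_smul, map_sub,
    reflection_I_smul hE, hfix e he, hfix f hf, map_add T, map_smul, sub_neg_eq_add]

end RealForm

theorem exists_isTotallyReal_total_of_isSymmetric (K : Submodule ℂ H) {Q : H →ₗ[ℂ] H}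
    (hQ : Q.IsSymmetric) (hK : MapsTo Q K K) :
    ∃ E : Submodule ℝ H, (∀ x ∈ E, x ∈ K) ∧ MapsTo Q E E ∧ IsTotallyReal (E : Set H) ∧
      ∀ w ∈ K, (∀ e ∈ E, ⟪e, w⟫_ℂ = 0) → w = 0 := by
  set 𝒮 : Set (Set H) := {s | s ⊆ K ∧ MapsTo Q s s ∧ IsTotallyReal s}
  obtain ⟨S, -, ⟨hSK, hSQ, hSreal⟩, hSmax⟩ : ∃ S, ∅ ⊆ S ∧ Maximal (· ∈ 𝒮) S := by
    refine zorn_subset_nonempty 𝒮 (fun c hc𝒮 hchain _ => ⟨⋃₀ c, ⟨?_, ?_, ?_⟩,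
      fun s hs => subset_sUnion_of_mem hs⟩) ∅
      ⟨empty_subset _, mapsTo_empty _ _, by simp [IsTotallyReal]⟩
    · exact sUnion_subset fun s hs => (hc𝒮 hs).1
    · rintro x ⟨s, hs, hx⟩
      exact ⟨s, hs, (hc𝒮 hs).2.1 hx⟩
    · rintro x ⟨s, hs, hx⟩ y ⟨t, ht, hy⟩
      obtain hst | hts := hchain.total hs ht
      · exact (hc𝒮 ht).2.2 x (hst hx) y hy
      · exact (hc𝒮 hs).2.2 x hx y (hts hy)
  refine ⟨span ℝ S, fun x hx => (span_le (p := K.restrictScalars ℝ)).2 hSK hx,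
    fun x hx => (span_le (p := (span ℝ S).comap (Q.restrictScalars ℝ))).2
      (fun y hy => subset_span (hSQ hy)) hx, hSreal.span, fun w hwK hw => ?_⟩
  have hwS : ∀ e ∈ S, ⟪e, w⟫_ℂ = 0 := fun e he => hw e (subset_span he)
  have horbit : S ∪ range (fun n : ℕ => (Q ^ n) w) ∈ 𝒮 := by
    refine ⟨union_subset hSK ?_, ?_, hSreal.union_range_pow hQ hSQ hwS⟩
    · rintro _ ⟨n, rfl⟩
      simpa only [Module.End.coe_pow] using hK.iterate n hwK
    · rintro x (hx | ⟨n, rfl⟩)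
      · exact Or.inl (hSQ hx)
      · exact Or.inr ⟨n + 1, by simp only [pow_succ', Module.End.mul_apply]⟩
  have hwS' : w ∈ S := hSmax horbit subset_union_left (Or.inr ⟨0, by simp⟩)
  exact inner_self_eq_zero.1 (hwS w hwS')

section SquareZero

variable {T : H →L[ℂ] H}

theorem apply_apply_eq_zero_of_comp_self_eq_zero (hT : T ∘L T = 0) (x : H) : T (T x) = 0 :=
  congr($hT x)

variable [CompleteSpace H] (T)

theorem isSymmetric_cfcAbs : ((CFC.abs T : H →L[ℂ] H) : H →ₗ[ℂ] H).IsSymmetric :=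
  (CFC.abs_nonneg T).isSelfAdjoint.isSymmetric

theorem cfcAbs_apply_cfcAbs_apply (x : H) : CFC.abs T (CFC.abs T x) = adjoint T (T x) := by
  simpa [star_eq_adjoint] using congr($(CFC.abs_mul_abs T) x)

theorem inner_cfcAbs_apply_cfcAbs_apply (x y : H) :
    ⟪CFC.abs T x, CFC.abs T y⟫_ℂ = ⟪T x, T y⟫_ℂ := by
  rw [(isSymmetric_cfcAbs T).apply_clm, cfcAbs_apply_cfcAbs_apply, adjoint_inner_right]

theorem cfcAbs_apply_eq_zero_iff {x : H} : CFC.abs T x = 0 ↔ T x = 0 := by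
  rw [← inner_self_eq_zero (𝕜 := ℂ), inner_cfcAbs_apply_cfcAbs_apply, inner_self_eq_zero]

theorem cfcAbs_apply_mem_orthogonal_ker (x : H) : CFC.abs T x ∈ T.kerᗮ := by
  rw [mem_orthogonal]
  intro u hu
  rw [← (isSymmetric_cfcAbs T).apply_clm, (cfcAbs_apply_eq_zero_iff T).2 hu, inner_zero_left]

theorem adjoint_apply_mem_orthogonal_ker (x : H) : adjoint T x ∈ T.kerᗮ :=
  T.orthogonal_ker ▸ le_topologicalClosure _ ⟨x, rfl⟩

variable {T}

theorem adjoint_apply_eq_zero_of_mem_orthogonal_ker (hT : T ∘L T = 0) {y : H}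
    (hy : y ∈ T.kerᗮ) : adjoint T y = 0 := by
  have hrange : (adjoint T).range ≤ (adjoint T).ker := by
    rintro _ ⟨x, rfl⟩
    simpa [hT] using (congr($(adjoint_comp T T) x)).symm
  rw [T.orthogonal_ker] at hy
  exact topologicalClosure_minimal _ hrange (adjoint T).isClosed_ker hy

theorem inner_apply_cfcAbs_apply (hT : T ∘L T = 0) (y z : H) :
    ⟪T y, CFC.abs T z⟫_ℂ = 0 :=
  inner_right_of_mem_orthogonal (apply_apply_eq_zero_of_comp_self_eq_zero hT y)
    (cfcAbs_apply_mem_orthogonal_ker T z)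

theorem adjoint_cfcAbs_apply_eq_zero (hT : T ∘L T = 0) (x : H) : adjoint T (CFC.abs T x) = 0 :=
  adjoint_apply_eq_zero_of_mem_orthogonal_ker hT (cfcAbs_apply_mem_orthogonal_ker T x)

variable (T)

noncomputable def realFormMap : H × H × H →ₗ[ℝ] H :=
  (((T + CFC.abs T : H →L[ℂ] H) : H →ₗ[ℂ] H).restrictScalars ℝ).coprod
    ((((Complex.I • (T - CFC.abs T) : H →L[ℂ] H) : H →ₗ[ℂ] H).restrictScalars ℝ).coprod
      LinearMap.id)

theorem realFormMap_apply (y z n : H) :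
    realFormMap T (y, z, n) = T y + CFC.abs T y + Complex.I • (T z - CFC.abs T z) + n := by
  simp [realFormMap, add_assoc]

variable {T}

theorem inner_apply_eq_zero_of_mem_ker_inf_ker {n : H} (hn : n ∈ T.ker ⊓ (adjoint T).ker)
    (a : H) : ⟪T a, n⟫_ℂ = 0 ∧ ⟪CFC.abs T a, n⟫_ℂ = 0 := by
  have hAn : CFC.abs T n = 0 := (cfcAbs_apply_eq_zero_iff T).2 hn.1
  have hT'n : adjoint T n = 0 := hn.2
  rw [← adjoint_inner_right T a n, (isSymmetric_cfcAbs T).apply_clm, hAn, hT'n]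
  simp

theorem inner_realFormMap (hT : T ∘L T = 0) {y z n y' z' n' : H}
    (hn : n ∈ T.ker ⊓ (adjoint T).ker) (hn' : n' ∈ T.ker ⊓ (adjoint T).ker) :
    ⟪realFormMap T (y, z, n), realFormMap T (y', z', n')⟫_ℂ =
      2 * ⟪y, CFC.abs T (CFC.abs T y')⟫_ℂ + 2 * ⟪z, CFC.abs T (CFC.abs T z')⟫_ℂ + ⟪n, n'⟫_ℂ := by
  have hTT : ∀ a b, ⟪T a, T b⟫_ℂ = ⟪a, CFC.abs T (CFC.abs T b)⟫_ℂ := fun a b => by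
    rw [← inner_cfcAbs_apply_cfcAbs_apply, (isSymmetric_cfcAbs T).apply_clm]
  have hAA : ∀ a b, ⟪CFC.abs T a, CFC.abs T b⟫_ℂ = ⟪a, CFC.abs T (CFC.abs T b)⟫_ℂ :=
    fun a b => (isSymmetric_cfcAbs T).apply_clm a _
  have hTA : ∀ a b, ⟪T a, CFC.abs T b⟫_ℂ = 0 := inner_apply_cfcAbs_apply hT
  have hAT : ∀ a b, ⟪CFC.abs T a, T b⟫_ℂ = 0 := fun a b => by
    rw [← inner_conj_symm, hTA, map_zero]
  obtain ⟨hTn, hAn⟩ := forall_and.1 (inner_apply_eq_zero_of_mem_ker_inf_ker hn)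
  obtain ⟨hTn', hAn'⟩ := forall_and.1 (inner_apply_eq_zero_of_mem_ker_inf_ker hn')
  simp only [realFormMap_apply, inner_add_left, inner_add_right, inner_sub_left, inner_sub_right,
    inner_smul_left, inner_smul_right, Complex.conj_I, hTT, hAA, hTA, hAT, hTn', hAn',
    fun a => inner_eq_zero_symm.1 (hTn a), fun a => inner_eq_zero_symm.1 (hAn a)]
  linear_combination (-2 * ⟪z, CFC.abs T (CFC.abs T z')⟫_ℂ) * Complex.I_sq

theorem add_adjoint_realFormMap (hT : T ∘L T = 0) {y z n : H}
    (hn : n ∈ T.ker ⊓ (adjoint T).ker) :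
    (T + adjoint T) (realFormMap T (y, z, n)) = realFormMap T (CFC.abs T y, -CFC.abs T z, 0) := by
  have hTn : T n = 0 := hn.1
  have hT'n : adjoint T n = 0 := hn.2
  simp only [realFormMap_apply, add_apply, map_add, map_sub, map_smul, map_neg,
    apply_apply_eq_zero_of_comp_self_eq_zero hT, ← cfcAbs_apply_cfcAbs_apply,
    adjoint_cfcAbs_apply_eq_zero hT, hTn, hT'n]
  module

theorem I_smul_sub_adjoint_realFormMap (hT : T ∘L T = 0) {y z n : H}
    (hn : n ∈ T.ker ⊓ (adjoint T).ker) :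
    (Complex.I • (T - adjoint T)) (realFormMap T (y, z, n)) =
      realFormMap T (CFC.abs T z, CFC.abs T y, 0) := by
  have hTn : T n = 0 := hn.1
  have hT'n : adjoint T n = 0 := hn.2
  simp only [realFormMap_apply, smul_apply, sub_apply, map_add, map_sub, map_smul,
    apply_apply_eq_zero_of_comp_self_eq_zero hT, ← cfcAbs_apply_cfcAbs_apply,
    adjoint_cfcAbs_apply_eq_zero hT, hTn, hT'n]
  match_scalars <;> norm_num [Complex.ext_iff]

theorem eq_zero_of_forall_inner_realFormMap_eq_zero {E₁ E₀ : Submodule ℝ H}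
    (hE₁ : ∀ w ∈ T.kerᗮ, (∀ e ∈ E₁, ⟪e, w⟫_ℂ = 0) → w = 0)
    (hE₀ : ∀ w ∈ T.ker ⊓ (adjoint T).ker, (∀ e ∈ E₀, ⟪e, w⟫_ℂ = 0) → w = 0) {w : H}
    (hw : ∀ p ∈ E₁.prod (E₁.prod E₀), ⟪realFormMap T p, w⟫_ℂ = 0) : w = 0 := by
  have hsum : ∀ y ∈ E₁, ⟪T y, w⟫_ℂ + ⟪CFC.abs T y, w⟫_ℂ = 0 := fun y hy => by
    simpa [realFormMap_apply, inner_add_left] using hw (y, 0, 0) ⟨hy, zero_mem _, zero_mem _⟩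
  have hdiff : ∀ y ∈ E₁, ⟪T y, w⟫_ℂ - ⟪CFC.abs T y, w⟫_ℂ = 0 := fun y hy => by
    simpa [realFormMap_apply, inner_smul_left, inner_sub_left] using
      hw (0, y, 0) ⟨zero_mem _, hy, zero_mem _⟩
  have hTw : T w = 0 := by
    refine (cfcAbs_apply_eq_zero_iff T).1 (hE₁ _ (cfcAbs_apply_mem_orthogonal_ker T w) ?_)
    intro y hy
    rw [← (isSymmetric_cfcAbs T).apply_clm]
    linear_combination (hsum y hy - hdiff y hy) / 2
  have hT'w : adjoint T w = 0 := by
    refine hE₁ _ (adjoint_apply_mem_orthogonal_ker T w) fun y hy => ?_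
    rw [adjoint_inner_right]
    linear_combination (hsum y hy + hdiff y hy) / 2
  refine hE₀ w ⟨hTw, hT'w⟩ fun n hn => ?_
  simpa [realFormMap_apply] using hw (0, 0, n) ⟨zero_mem _, zero_mem _, hn⟩

end SquareZero

theorem exists_realForm_of_comp_self_eq_zero [CompleteSpace H] {T : H →L[ℂ] H}
    (hT : T ∘L T = 0) :
    ∃ E : Submodule ℝ H, IsClosed (E : Set H) ∧ IsTotallyReal (E : Set H) ∧
      (∀ w : H, (∀ e ∈ E, ⟪e, w⟫_ℂ = 0) → w = 0) ∧
      MapsTo (T + adjoint T) E E ∧ MapsTo (Complex.I • (T - adjoint T)) E E := by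
  obtain ⟨E₁, -, hE₁abs, hE₁real, hE₁total⟩ :=
    exists_isTotallyReal_total_of_isSymmetric T.kerᗮ (isSymmetric_cfcAbs T)
      fun x _ => cfcAbs_apply_mem_orthogonal_ker T x
  obtain ⟨E₀, hE₀N, -, hE₀real, hE₀total⟩ :=
    exists_isTotallyReal_total_of_isSymmetric (T.ker ⊓ (adjoint T).ker)
      LinearMap.IsSymmetric.zero fun _ _ => zero_mem _
  set M := (E₁.prod (E₁.prod E₀)).map (realFormMap T)
  have hMreal : IsTotallyReal (M : Set H) := by
    rintro _ ⟨⟨y, z, n⟩, ⟨hy, hz, hn⟩, rfl⟩ _ ⟨⟨y', z', n'⟩, ⟨hy', hz', hn'⟩, rfl⟩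
    rw [inner_realFormMap hT (hE₀N n hn) (hE₀N n' hn')]
    have hyy' : (⟪y, CFC.abs T (CFC.abs T y')⟫_ℂ).im = 0 :=
      hE₁real y hy _ (hE₁abs (hE₁abs hy'))
    have hzz' : (⟪z, CFC.abs T (CFC.abs T z')⟫_ℂ).im = 0 :=
      hE₁real z hz _ (hE₁abs (hE₁abs hz'))
    simp [hyy', hzz', hE₀real n hn n' hn']
  have hclosure : ∀ A : H →L[ℂ] H, MapsTo A M M →
      MapsTo A M.topologicalClosure M.topologicalClosure := fun A hA => by
    simpa only [topologicalClosure_coe] using hA.closure A.continuous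
  refine ⟨M.topologicalClosure, M.isClosed_topologicalClosure, hMreal.closure,
    fun w hw => eq_zero_of_forall_inner_realFormMap_eq_zero hE₁total hE₀total
      fun p hp => hw _ (M.le_topologicalClosure (mem_map_of_mem hp)), hclosure _ ?_,
    hclosure _ ?_⟩
  · rintro _ ⟨⟨y, z, n⟩, ⟨hy, hz, hn⟩, rfl⟩
    rw [add_adjoint_realFormMap hT (hE₀N n hn)]
    exact mem_map_of_mem ⟨hE₁abs hy, neg_mem (hE₁abs hz), zero_mem _⟩
  · rintro _ ⟨⟨y, z, n⟩, ⟨hy, hz, hn⟩, rfl⟩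
    rw [I_smul_sub_adjoint_realFormMap hT (hE₀N n hn)]
    exact mem_map_of_mem ⟨hE₁abs hz, hE₁abs hy, zero_mem _⟩

end ComplexSymmetric

/-- If `T² = 0` then `T` is a complex symmetric operator. -/
theorem nilpotent_order_two_is_complex_symmetric
    {H : Type*} [NormedAddCommGroup H] [InnerProductSpace ℂ H] [CompleteSpace H]
    (T : H →L[ℂ] H) (hT : T ∘L T = 0) :
    ∃ C : H → H, IsConjugation C ∧ ∀ x, T x = C (adjoint T (C x)) := by
  obtain ⟨E, hclosed, hreal, htotal, hX, hY⟩ := exists_realForm_of_comp_self_eq_zero hT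
  have : CompleteSpace E := hclosed.completeSpace_coe
  have hE : Eᗮ = Complex.I • E := orthogonal_eq_I_smul hreal htotal
  exact ⟨E.reflection, isConjugation_reflection hE,
    apply_eq_reflection_adjoint_reflection hE hX hY⟩
end

section
/- Let T be a complex symmetric bounded operator on a complex Hilbert space H. Then for every word w(x, y) in two noncommuting variables (given by a finite list of Booleans selecting T or T* in each factor), the operator norm satisfies ‖w(T, T*)‖ = ‖w(T*, T)‖, where w(T*, T) is obtained from w(T, T*) by exchanging T and T* in every factor. -/
open ContinuousLinearMap

/-- Evaluation of a word in two noncommuting letters at the pair `(X, Y)`: the list of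
Booleans selects `X` (for `true`) or `Y` (for `false`) in each factor, and the factors
are composed in order. -/
def wordEval {H : Type*} [NormedAddCommGroup H] [InnerProductSpace ℂ H]
    (X Y : H →L[ℂ] H) (w : List Bool) : H →L[ℂ] H :=
  (w.map (fun b => if b then X else Y)).prod

theorem wordEval_cons {H : Type*} [NormedAddCommGroup H] [InnerProductSpace ℂ H]
    (X Y : H →L[ℂ] H) (b : Bool) (w : List Bool) (x : H) :
    wordEval X Y (b :: w) x = (if b then X else Y) (wordEval X Y w x) := by
  cases b <;> simp [wordEval, List.prod_cons, ContinuousLinearMap.mul_apply]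

/-- If `T` is complex symmetric, then `‖w(T, T*)‖ = ‖w(T*, T)‖` for every word `w`. -/
theorem norm_word_of_complex_symmetric
    {H : Type*} [NormedAddCommGroup H] [InnerProductSpace ℂ H] [CompleteSpace H]
    (T : H →L[ℂ] H)
    (hT : ∃ C : H → H, IsConjugation C ∧ ∀ x, T x = C (adjoint T (C x)))
    (w : List Bool) :
    ‖wordEval T (adjoint T) w‖ = ‖wordEval (adjoint T) T w‖ := by
  obtain ⟨C, ⟨_, hnorm, hinv⟩, hTC⟩ := hT
  have hadj : ∀ x, adjoint T x = C (T (C x)) := by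
    intro x
    have h := hTC (C x)
    rw [hinv] at h
    rw [← hinv (adjoint T x), ← h]
  have key : ∀ (w : List Bool) (x : H),
      wordEval T (adjoint T) w x = C (wordEval (adjoint T) T w (C x)) := by
    intro w
    induction w with
    | nil => intro x; simp [wordEval, hinv]
    | cons b w ih =>
      intro x
      rw [wordEval_cons, wordEval_cons, ih]
      cases b with
      | true =>
        simp only [ite_true]
        rw [hTC, hinv]
      | false =>
        simp only [Bool.false_eq_true, ite_false]
        rw [hadj, hinv]
  have key' : ∀ (w : List Bool) (x : H),
      wordEval (adjoint T) T w x = C (wordEval T (adjoint T) w (C x)) := by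
    intro w x
    rw [key w (C x), hinv, hinv]
  apply le_antisymm
  · apply ContinuousLinearMap.opNorm_le_bound _ (norm_nonneg _)
    intro x
    rw [key w x, hnorm]
    calc ‖wordEval (adjoint T) T w (C x)‖ ≤ ‖wordEval (adjoint T) T w‖ * ‖C x‖ :=
          ContinuousLinearMap.le_opNorm _ _
      _ = ‖wordEval (adjoint T) T w‖ * ‖x‖ := by rw [hnorm]
  · apply ContinuousLinearMap.opNorm_le_bound _ (norm_nonneg _)
    intro x
    rw [key' w x, hnorm]
    calc ‖wordEval T (adjoint T) w (C x)‖ ≤ ‖wordEval T (adjoint T) w‖ * ‖C x‖ :=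
          ContinuousLinearMap.le_opNorm _ _
      _ = ‖wordEval T (adjoint T) w‖ * ‖x‖ := by rw [hnorm]
end

section
/- Let T be a complex symmetric bounded operator on a complex Hilbert space H. Then for every noncommutative polynomial p(x, y) in two noncommuting variables with complex coefficients — concretely, for every finite list of pairs (c₁, w₁), …, (c_k, w_k) where each cᵢ ∈ ℂ and each wᵢ is a word in {x, y} — one has ‖∑ᵢ cᵢ • wᵢ(T, T*)‖ = ‖∑ᵢ conj(cᵢ) • wᵢ(T*, T)‖, where wᵢ(T*, T) is obtained from wᵢ(T, T*) by exchanging T and T* in every factor. -/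
open ContinuousLinearMap

/-- If `T` is complex symmetric then `‖p(T, T*)‖ = ‖p̃(T*, T)‖` for every noncommutative
polynomial `p`, where `p̃` has the coefficients of `p` conjugated.  The polynomial is
given as a finite list of pairs (coefficient, word). -/
theorem norm_polynomial_of_complex_symmetric
    {H : Type*} [NormedAddCommGroup H] [InnerProductSpace ℂ H] [CompleteSpace H]
    (T : H →L[ℂ] H)
    (hT : ∃ C : H → H, IsConjugation C ∧ ∀ x, T x = C (adjoint T (C x)))
    (p : List (ℂ × List Bool)) :
    ‖(p.map (fun cw => cw.1 • wordEval T (adjoint T) cw.2)).sum‖ =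
    ‖(p.map (fun cw => (starRingEnd ℂ cw.1) • wordEval (adjoint T) T cw.2)).sum‖ := by
  obtain ⟨C, ⟨hlin, hiso, hinv⟩, hTC⟩ := hT
  have hCadd : ∀ x y, C (x + y) = C x + C y := by
    intro x y
    have := hlin 1 x y
    simpa using this
  have hC0 : C 0 = 0 := by
    have h := hCadd 0 0
    simp only [add_zero] at h
    exact left_eq_add.mp h
  have hCsmul : ∀ (a : ℂ) (x : H), C (a • x) = (starRingEnd ℂ a) • C x := by
    intro a x
    have := hlin a x 0
    simpa [hC0] using this
  -- T ∘ C = C ∘ T*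
  have hTc : ∀ x, T (C x) = C (adjoint T x) := by
    intro x
    have := hTC (C x)
    simpa [hinv] using this
  -- T* ∘ C = C ∘ T
  have hTc' : ∀ x, adjoint T (C x) = C (T x) := by
    intro x
    have := congrArg C (hTC x)
    rw [hinv] at this
    exact this.symm
  -- key word lemma
  have hword : ∀ (w : List Bool) (x : H),
      wordEval T (adjoint T) w x = C (wordEval (adjoint T) T w (C x)) := by
    intro w
    induction w with
    | nil => intro x; simp [wordEval, hinv]
    | cons b w ih =>
      intro x
      have hw : wordEval T (adjoint T) (b :: w) x
          = (if b then T else adjoint T) (wordEval T (adjoint T) w x) := by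
        cases b <;> simp [wordEval, List.prod_cons, ContinuousLinearMap.mul_apply]
      have hw' : wordEval (adjoint T) T (b :: w) (C x)
          = (if b then adjoint T else T) (wordEval (adjoint T) T w (C x)) := by
        cases b <;> simp [wordEval, List.prod_cons, ContinuousLinearMap.mul_apply]
      rw [hw, hw', ih x]
      cases b with
      | true =>
        simp only [if_true]
        rw [hTc]
      | false =>
        simp only [Bool.false_eq_true, if_false]
        rw [hTc']
  -- sum lemma
  have hsum : ∀ (q : List (ℂ × List Bool)) (x : H),
      ((q.map (fun cw => cw.1 • wordEval T (adjoint T) cw.2)).sum) x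
        = C (((q.map (fun cw => (starRingEnd ℂ cw.1) • wordEval (adjoint T) T cw.2)).sum) (C x)) := by
    intro q
    induction q with
    | nil => intro x; simp [hC0]
    | cons cw q ih =>
      intro x
      simp only [List.map_cons, List.sum_cons, ContinuousLinearMap.add_apply,
        ContinuousLinearMap.smul_apply]
      rw [ih x, hword cw.2 x]
      have := hlin (starRingEnd ℂ cw.1) (wordEval (adjoint T) T cw.2 (C x))
        (((q.map (fun cw => (starRingEnd ℂ cw.1) • wordEval (adjoint T) T cw.2)).sum) (C x))
      simp only [RingHomCompTriple.comp_apply, Complex.conj_conj] at this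
      rw [this]
      simp
  set S := (p.map (fun cw => cw.1 • wordEval T (adjoint T) cw.2)).sum with hS
  set S' := (p.map (fun cw => (starRingEnd ℂ cw.1) • wordEval (adjoint T) T cw.2)).sum with hS'
  have hpt : ∀ x, S x = C (S' (C x)) := hsum p
  have hpt' : ∀ x, S' x = C (S (C x)) := by
    intro x
    have := congrArg C (hpt (C x))
    rw [hinv] at this
    rw [hinv] at this
    exact this.symm
  apply le_antisymm
  · apply ContinuousLinearMap.opNorm_le_bound _ (norm_nonneg S')
    intro x
    rw [hpt x, hiso]
    calc ‖S' (C x)‖ ≤ ‖S'‖ * ‖C x‖ := S'.le_opNorm (C x)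
      _ = ‖S'‖ * ‖x‖ := by rw [hiso]
  · apply ContinuousLinearMap.opNorm_le_bound _ (norm_nonneg S)
    intro x
    rw [hpt' x, hiso]
    calc ‖S (C x)‖ ≤ ‖S‖ * ‖C x‖ := S.le_opNorm (C x)
      _ = ‖S‖ * ‖x‖ := by rw [hiso]
end

section
/- Every complex square matrix M with M² = 0 is unitarily similar to a symmetric complex matrix: there exists a unitary matrix U of the same size such that (U M U*)ᵀ = U M U*. -/
/-!
Since `M² = 0`, the range of `M` lies in its kernel. Take orthonormal eigenvectors `eₖ` of `M*M`
with `M eₖ = sₖ uₖ ≠ 0`; the `uₖ` are then orthonormal and orthogonal to every `eₖ`, and `M`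
kills the orthogonal complement of all the `eₖ, uₖ` while its range is orthogonal to it. On each
plane `span {eₖ, uₖ}` the orthonormal basis `(eₖ + i uₖ)/√2, (i eₖ + uₖ)/√2` gives `M` the
symmetric matrix `sₖ/2 · [[-i, 1], [1, i]]`, so extending these vectors to an orthonormal basis
of `ℂⁿ` yields a unitary `U` with `U M U*` symmetric.
-/

open Matrix LinearMap Module Complex
open scoped InnerProductSpace ComplexConjugate

theorem Matrix.exists_mem_unitaryGroup_isSymm_of_orthonormalBasis {ι : Type*} [Fintype ι]
    [DecidableEq ι] (M : Matrix ι ι ℂ) (b : OrthonormalBasis ι ℂ (EuclideanSpace ℂ ι))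
    (hb : (toMatrixOrthonormal b M.toEuclideanLin).IsSymm) :
    ∃ U ∈ unitaryGroup ι ℂ, (U * M * star U).IsSymm := by
  set P := (EuclideanSpace.basisFun ι ℂ).toBasis.toMatrix b
  have hP : P ∈ unitaryGroup ι ℂ :=
    (EuclideanSpace.basisFun ι ℂ).toMatrix_orthonormalBasis_mem_unitary b
  have hPMP : star P * M * P = toMatrixOrthonormal b M.toEuclideanLin := by
    ext i j
    simp only [P, toMatrixOrthonormal_apply_apply, mul_apply, star_apply, Basis.toMatrix_apply,
      OrthonormalBasis.coe_toBasis_repr_apply, EuclideanSpace.basisFun_repr, RCLike.star_def,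
      PiLp.inner_apply, ofLp_toLpLin, toLin'_apply, mulVec, dotProduct, RCLike.inner_apply,
      Finset.sum_mul]
    rw [Finset.sum_comm]
    exact Finset.sum_congr rfl fun _ _ => Finset.sum_congr rfl fun _ _ => by ring
  exact ⟨star P, Unitary.star_mem hP, by rwa [star_star, hPMP]⟩

variable {E : Type*} [NormedAddCommGroup E] [InnerProductSpace ℂ E]

theorem Orthonormal.exists_orthonormalBasis_isSymm_toMatrixOrthonormal [FiniteDimensional ℂ E]
    {ι κ : Type*} [Fintype ι] [DecidableEq ι] (hι : finrank ℂ E = Fintype.card ι)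
    (T : E →ₗ[ℂ] E) {w : κ → E} (hw : Orthonormal ℂ w)
    (hsymm : ∀ a b, ⟪w a, T (w b)⟫_ℂ = ⟪w b, T (w a)⟫_ℂ)
    (hperp : ∀ x, (∀ a, ⟪w a, x⟫_ℂ = 0) → T x = 0 ∧ ∀ y, ⟪x, T y⟫_ℂ = 0) :
    ∃ b : OrthonormalBasis ι ℂ E, (toMatrixOrthonormal b T).IsSymm := by
  have hv : Orthonormal ℂ ((↑) : Set.range w → E) :=
    (orthonormal_subtype_range hw.linearIndependent.injective).mpr hw
  obtain ⟨u, b, hwu, hb⟩ := hv.exists_orthonormalBasis_extension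
  have hperp' : ∀ x ∈ u, x ∉ Set.range w → T x = 0 ∧ ∀ y, ⟪x, T y⟫_ℂ = 0 := by
    refine fun x hx hxw => hperp x fun a => ?_
    have hne : (⟨w a, hwu ⟨a, rfl⟩⟩ : u) ≠ ⟨x, hx⟩ := fun h => hxw ⟨a, congrArg Subtype.val h⟩
    simpa [hb] using b.orthonormal.2 hne
  have hsymm' : ∀ x ∈ u, ∀ y ∈ u, ⟪x, T y⟫_ℂ = ⟪y, T x⟫_ℂ := by
    intro x hx y hy
    by_cases hxw : x ∈ Set.range w
    · by_cases hyw : y ∈ Set.range w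
      · obtain ⟨a, rfl⟩ := hxw
        obtain ⟨a', rfl⟩ := hyw
        exact hsymm a a'
      · simp [(hperp' y hy hyw).1, (hperp' y hy hyw).2]
    · simp [(hperp' x hx hxw).1, (hperp' x hx hxw).2]
  have e : u ≃ ι := Fintype.equivOfCardEq <| by rw [← hι, finrank_eq_card_basis b.toBasis]
  refine ⟨b.reindex e, Matrix.ext fun i j => ?_⟩
  simp only [transpose_apply, toMatrixOrthonormal_apply_apply, OrthonormalBasis.reindex_apply, hb]
  exact hsymm' _ (e.symm j).2 _ (e.symm i).2

theorem LinearMap.exists_orthonormal_pairs_of_comp_self_eq_zero [FiniteDimensional ℂ E]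
    (T : E →ₗ[ℂ] E) (hT : T ∘ₗ T = 0) :
    ∃ (κ : Type) (e u : κ → E) (s : κ → ℂ), Orthonormal ℂ e ∧ Orthonormal ℂ u ∧
      (∀ k l, ⟪e k, u l⟫_ℂ = 0) ∧ (∀ k, T (e k) = s k • u k) ∧ (∀ k, T (u k) = 0) ∧
      ∀ x, (∀ k, ⟪e k, x⟫_ℂ = 0 ∧ ⟪u k, x⟫_ℂ = 0) → T x = 0 ∧ ∀ y, ⟪x, T y⟫_ℂ = 0 := by
  have hS := T.isSymmetric_adjoint_mul_self
  set f := hS.eigenvectorBasis rfl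
  set μ := hS.eigenvalues rfl
  have hf : ∀ i, T.adjoint (T (f i)) = (μ i : ℂ) • f i := hS.apply_eigenvectorBasis rfl
  have hTT : ∀ i j, ⟪T (f i), T (f j)⟫_ℂ = μ j * ⟪f i, f j⟫_ℂ := fun i j => by
    rw [← adjoint_inner_right, hf, inner_smul_right]
  -- `f i` is a nonzero multiple of `T* (T (f i))`, which is orthogonal to `range T` as `T² = 0`
  have hTf : ∀ i, T (f i) ≠ 0 → ∀ x, ⟪f i, T x⟫_ℂ = 0 := by
    intro i hi x
    have hμ : (μ i : ℂ) ≠ 0 := fun h0 => hi <| by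
      rw [← inner_self_eq_zero (𝕜 := ℂ), hTT, h0, zero_mul]
    have : (μ i : ℂ) * ⟪f i, T x⟫_ℂ = 0 := calc
      (μ i : ℂ) * ⟪f i, T x⟫_ℂ = ⟪T.adjoint (T (f i)), T x⟫_ℂ := by
        rw [hf, inner_smul_left, conj_ofReal]
      _ = 0 := by rw [adjoint_inner_left, ← comp_apply, hT, zero_apply, inner_zero_right]
    exact (mul_eq_zero.mp this).resolve_left hμ
  refine ⟨{i // T (f i) ≠ 0}, fun k => f k, fun k => ((‖T (f k)‖ : ℂ)⁻¹) • T (f k),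
    fun k => ‖T (f k)‖, f.orthonormal.comp _ Subtype.val_injective,
    ⟨fun k => ?_, fun k l hkl => ?_⟩, fun k l => ?_, fun k => ?_, fun k => ?_,
    fun x hx => ⟨?_, fun y => ?_⟩⟩
  · simp only [norm_smul, norm_inv, norm_real, norm_norm]
    exact inv_mul_cancel₀ (norm_ne_zero_iff.mpr k.2)
  · dsimp only
    rw [inner_smul_left, inner_smul_right, hTT, f.orthonormal.2 (Subtype.val_injective.ne hkl)]
    simp
  · rw [inner_smul_right, hTf k k.2, mul_zero]
  · exact (smul_inv_smul₀ (ofReal_ne_zero.mpr (norm_ne_zero_iff.mpr k.2)) _).symm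
  · rw [map_smul, ← comp_apply, hT, zero_apply, smul_zero]
  · rw [← f.sum_repr' x, map_sum]
    refine Finset.sum_eq_zero fun i _ => ?_
    by_cases hi : T (f i) = 0
    · rw [map_smul, hi, smul_zero]
    · rw [(hx ⟨i, hi⟩).1, zero_smul, map_zero]
  · rw [← f.sum_repr' y, map_sum, inner_sum]
    refine Finset.sum_eq_zero fun i _ => ?_
    by_cases hi : T (f i) = 0
    · rw [map_smul, hi, smul_zero, inner_zero_right]
    · have hu : ⟪T (f i), x⟫_ℂ = 0 := by
        simpa [inner_smul_left, hi] using (hx ⟨i, hi⟩).2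
      rw [map_smul, inner_smul_right, inner_eq_zero_symm.mp hu, mul_zero]

section PairRotation

variable {κ : Type*} {e u : κ → E}

noncomputable def pairRotation (e u : κ → E) : κ ⊕ κ → E :=
  Sum.elim (fun k => ((√2 : ℝ) : ℂ)⁻¹ • (e k + I • u k))
    (fun k => ((√2 : ℝ) : ℂ)⁻¹ • (I • e k + u k))

lemma inv_sqrt_two_sq : (((√2 : ℝ) : ℂ)⁻¹) ^ 2 = 2⁻¹ := by
  rw [inv_pow, ← ofReal_pow, Real.sq_sqrt zero_le_two]
  norm_num

theorem orthonormal_pairRotation (he : Orthonormal ℂ e) (hu : Orthonormal ℂ u)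
    (heu : ∀ k l, ⟪e k, u l⟫_ℂ = 0) : Orthonormal ℂ (pairRotation e u) := by
  classical
  rw [orthonormal_iff_ite] at he hu ⊢
  have hue : ∀ k l, ⟪u k, e l⟫_ℂ = 0 := fun k l => inner_eq_zero_symm.mp (heu l k)
  rintro (k | k) (l | l) <;>
  · simp only [pairRotation, Sum.elim_inl, Sum.elim_inr, inner_smul_left, inner_smul_right,
      inner_add_left, inner_add_right, he, hu, heu, hue, conj_I, map_inv₀, conj_ofReal,
      Sum.inl.injEq, Sum.inr.injEq, reduceCtorEq, if_false]
    split_ifs <;> ring_nf <;> simp only [I_sq, inv_sqrt_two_sq] <;> norm_num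

theorem inner_pairRotation_map_comm (hu : Orthonormal ℂ u) (heu : ∀ k l, ⟪e k, u l⟫_ℂ = 0)
    (T : E →ₗ[ℂ] E) {s : κ → ℂ} (hTe : ∀ k, T (e k) = s k • u k) (hTu : ∀ k, T (u k) = 0)
    (a b : κ ⊕ κ) :
    ⟪pairRotation e u a, T (pairRotation e u b)⟫_ℂ =
      ⟪pairRotation e u b, T (pairRotation e u a)⟫_ℂ := by
  classical
  rw [orthonormal_iff_ite] at hu
  rcases a with k | k <;> rcases b with l | l <;> by_cases hkl : k = l <;>
    simp [pairRotation, hTe, hTu, heu, hu, hkl, eq_comm (a := l)]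
  all_goals ring_nf; rw [I_sq]; ring

theorem inner_eq_zero_of_forall_inner_pairRotation_eq_zero {x : E}
    (hx : ∀ a, ⟪pairRotation e u a, x⟫_ℂ = 0) (k : κ) : ⟪e k, x⟫_ℂ = 0 ∧ ⟪u k, x⟫_ℂ = 0 := by
  have h₁ := hx (.inl k)
  have h₂ := hx (.inr k)
  simp only [pairRotation, Sum.elim_inl, Sum.elim_inr, inner_smul_left, inner_add_left, conj_I,
    map_inv₀, conj_ofReal, mul_eq_zero, inv_eq_zero, ofReal_eq_zero, Real.sqrt_eq_zero',
    not_le.mpr zero_lt_two, false_or] at h₁ h₂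
  have hu : ⟪u k, x⟫_ℂ = 0 := by linear_combination (h₂ + I * h₁ + ⟪u k, x⟫_ℂ * I_sq) / 2
  exact ⟨by linear_combination h₁ + I * hu, hu⟩

end PairRotation

/-- Every complex square matrix `M` with `M² = 0` is unitarily similar to a symmetric
complex matrix. -/
theorem sq_zero_unitarily_similar_symmetric
    {n : ℕ} (M : Matrix (Fin n) (Fin n) ℂ) (hM : M * M = 0) :
    ∃ U ∈ Matrix.unitaryGroup (Fin n) ℂ,
      (U * M * star U)ᵀ = U * M * star U := by
  have hT : M.toEuclideanLin ∘ₗ M.toEuclideanLin = 0 := by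
    rw [← toLpLin_mul_same, hM, map_zero]
  obtain ⟨κ, e, u, s, he, hu, heu, hTe, hTu, hperp⟩ :=
    M.toEuclideanLin.exists_orthonormal_pairs_of_comp_self_eq_zero hT
  obtain ⟨b, hb⟩ :=
    (orthonormal_pairRotation he hu heu).exists_orthonormalBasis_isSymm_toMatrixOrthonormal
      (ι := Fin n) (by simp) _ (inner_pairRotation_map_comm hu heu _ hTe hTu)
      fun x hx => hperp x (inner_eq_zero_of_forall_inner_pairRotation_eq_zero hx)
  exact M.exists_mem_unitaryGroup_isSymm_of_orthonormalBasis b hb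
end

section
/- For every n × n complex matrix A, the Kronecker product A ⊗ Aᵀ is unitarily similar to a symmetric complex matrix. (This is the finite-dimensional case of the statement that A ⊗ J A* J is complex symmetric for any conjugation J, with J the entrywise complex conjugation, for which J A* J = Aᵀ.) -/
open Matrix Kronecker

/-- For every square complex matrix `A`, the Kronecker product `A ⊗ₖ Aᵀ` is unitarily
similar to a symmetric complex matrix. -/
theorem kronecker_transpose_unitarily_similar_symmetric
    {n : ℕ} (A : Matrix (Fin n) (Fin n) ℂ) :
    ∃ W ∈ Matrix.unitaryGroup (Fin n × Fin n) ℂ,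
      (W * (A ⊗ₖ Aᵀ) * star W)ᵀ = W * (A ⊗ₖ Aᵀ) * star W := by
  set M : Matrix (Fin n × Fin n) (Fin n × Fin n) ℂ := A ⊗ₖ Aᵀ with hM
  set S : Matrix (Fin n × Fin n) (Fin n × Fin n) ℂ :=
    Matrix.of (fun i j => if j = (i.2, i.1) then 1 else 0) with hSdef
  have key : ∀ p x : Fin n × Fin n, (p = (x.2, x.1)) ↔ (x = (p.2, p.1)) := by
    intro p x
    simp only [Prod.ext_iff]
    tauto
  have hSt : Sᵀ = S := by
    ext i j
    simp only [hSdef, transpose_apply, of_apply, key]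
  have hSstar : star S = S := by
    ext i j
    simp only [hSdef, star_apply, of_apply, key]
    split_ifs <;> simp
  have hS2 : S * S = 1 := by
    ext i k
    simp only [hSdef, mul_apply, of_apply, ite_mul, one_mul, zero_mul, key,
      Finset.sum_ite_eq', Finset.mem_univ, if_true, Matrix.one_apply]
    by_cases h : i = k
    · subst h; simp
    · rw [if_neg, if_neg h]
      intro hc
      exact h (by rw [Prod.ext_iff] at hc ⊢; tauto)
  have hSMS : S * M * S = Mᵀ := by
    ext i k
    simp only [hM, hSdef, mul_apply, of_apply, ite_mul, mul_ite, one_mul,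
      zero_mul, mul_one, mul_zero, key, Finset.sum_ite_eq, Finset.sum_ite_eq',
      Finset.mem_univ, if_true, transpose_apply, kroneckerMap_apply]
    ring
  set a : ℝ := (Real.sqrt 2)⁻¹ with ha
  set α : ℂ := (a : ℂ) with hα
  have hαsq : α * α = 2⁻¹ := by
    rw [hα, ha]
    push_cast
    rw [← mul_inv, ← Complex.ofReal_mul,
      Real.mul_self_sqrt (by norm_num : (0:ℝ) ≤ 2)]
    norm_num
  set W : Matrix (Fin n × Fin n) (Fin n × Fin n) ℂ :=
    α • 1 + (α * Complex.I) • S with hW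
  have hWstar : star W = α • 1 - (α * Complex.I) • S := by
    rw [hW, star_add, star_smul, star_smul, hSstar, star_one, star_mul']
    rw [Complex.star_def, Complex.conj_I, hα, Complex.conj_ofReal]
    ring_nf
    rw [sub_eq_add_neg, neg_smul]
  have hWt : Wᵀ = W := by
    rw [hW, transpose_add, transpose_smul, transpose_smul, transpose_one, hSt]
  have hWstart : (star W)ᵀ = star W := by
    rw [hWstar, transpose_sub, transpose_smul, transpose_smul, transpose_one, hSt]
  have hunit : W * star W = 1 := by
    rw [hW, hWstar, add_mul, mul_sub, mul_sub, smul_mul_smul_comm,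
      smul_mul_smul_comm, smul_mul_smul_comm, smul_mul_smul_comm]
    simp only [Matrix.one_mul, Matrix.mul_one, hS2]
    have h1 : (α * Complex.I) * (α * Complex.I) = -(2⁻¹ : ℂ) := by
      calc (α * Complex.I) * (α * Complex.I)
          = (α * α) * (Complex.I * Complex.I) := by ring
        _ = -(2⁻¹ : ℂ) := by rw [hαsq, Complex.I_mul_I]; ring
    rw [hαsq, h1, show α * Complex.I * α = α * (α * Complex.I) by ring,
      neg_smul, sub_neg_eq_add]
    have hfin : (2⁻¹ : ℂ) • (1 : Matrix (Fin n × Fin n) (Fin n × Fin n) ℂ) -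
        (α * (α * Complex.I)) • S + ((α * (α * Complex.I)) • S + (2⁻¹ : ℂ) • 1) =
        ((2⁻¹ : ℂ) + 2⁻¹) • 1 := by
      rw [add_smul]
      abel
    rw [hfin]
    norm_num
  have hSW : S * W = Complex.I • star W := by
    rw [hW, hWstar, Matrix.mul_add, Matrix.mul_smul, Matrix.mul_smul,
      Matrix.mul_one, hS2, smul_sub, smul_smul, smul_smul]
    rw [show Complex.I * (α * Complex.I) = -α by
      rw [show Complex.I * (α * Complex.I) = α * (Complex.I * Complex.I) by ring,
        Complex.I_mul_I]; ring]
    rw [show Complex.I * α = α * Complex.I by ring]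
    rw [neg_smul, sub_neg_eq_add, add_comm]
  have hWsS : star W * S = (-Complex.I) • W := by
    rw [hW, hWstar, Matrix.sub_mul, Matrix.smul_mul, Matrix.smul_mul,
      Matrix.one_mul, hS2, smul_add, smul_smul, smul_smul]
    rw [show -Complex.I * (α * Complex.I) = α by
      rw [show -Complex.I * (α * Complex.I) = -(α * (Complex.I * Complex.I)) by ring,
        Complex.I_mul_I]; ring]
    rw [show -Complex.I * α = -(α * Complex.I) by ring, neg_smul]
    rw [sub_eq_add_neg, add_comm]
  refine ⟨W, ?_, ?_⟩
  · rw [Matrix.mem_unitaryGroup_iff]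
    exact hunit
  · calc (W * M * star W)ᵀ = (star W)ᵀ * (Mᵀ * Wᵀ) := by
          rw [transpose_mul, transpose_mul]
      _ = star W * (S * M * S * W) := by
          rw [hWstart, hWt, ← hSMS]
      _ = (star W * S) * M * (S * W) := by
          simp only [Matrix.mul_assoc]
      _ = ((-Complex.I) • W) * M * (Complex.I • star W) := by rw [hSW, hWsS]
      _ = ((-Complex.I) * Complex.I) • (W * M * star W) := by
          rw [Matrix.smul_mul, Matrix.smul_mul, Matrix.mul_smul, smul_smul]
      _ = W * M * star W := by
          rw [show -Complex.I * Complex.I = 1 by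
            rw [neg_mul, Complex.I_mul_I]; ring, one_smul]
end

section
/- Let T be the bounded operator on ℓ²(ℕ × ℕ; ℂ) determined by (T f)(p, q) = 0 if p = 0 and (T f)(p, q) = f(p − 1, q + 1) if p ≥ 1 (equivalently, T sends the standard basis vector e_{(m,n)} to e_{(m+1, n−1)} when n ≥ 1 and to 0 when n = 0; this realizes S ⊗ S*, the tensor product of the unilateral shift with its adjoint). Then T is a complex symmetric operator: there exists a conjugation C on ℓ²(ℕ × ℕ; ℂ) with T = C ∘ T* ∘ C. -/
/-!
The flip `(p, q) ↦ (q, p)` of `ℕ × ℕ` exchanges the two tensor factors, so it intertwines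
`S ⊗ S*` with `S* ⊗ S = (S ⊗ S*)*`. Composing the induced unitary with coordinatewise complex
conjugation gives the conjugation `C f (p, q) = conj (f (q, p))`; checking `T = C T* C` is then a
coordinate computation once `T*` is read off from the values of `T` on the standard basis.
-/

open ContinuousLinearMap

open scoped ENNReal InnerProductSpace

section

variable {ι E : Type*} [NormedAddCommGroup E] {p : ℝ≥0∞}

theorem Memℓp.comp_equiv {f : ι → E} (hf : Memℓp f p) (e : ι ≃ ι) : Memℓp (f ∘ e) p := by
  rcases p.trichotomy with rfl | rfl | hp
  · rw [memℓp_zero_iff] at hf ⊢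
    exact hf.preimage e.injective.injOn
  · rw [memℓp_infty_iff] at hf ⊢
    rwa [← e.surjective.range_comp] at hf
  · rw [memℓp_gen_iff hp] at hf ⊢
    exact e.summable_iff.2 hf

namespace lp

def compEquiv (e : ι ≃ ι) (f : lp (fun _ : ι => E) p) : lp (fun _ : ι => E) p :=
  ⟨f ∘ e, (lp.memℓp f).comp_equiv e⟩

@[simp]
theorem compEquiv_apply (e : ι ≃ ι) (f : lp (fun _ : ι => E) p) (i : ι) :
    compEquiv e f i = f (e i) := rfl

theorem norm_compEquiv (hp : 0 < p.toReal) (e : ι ≃ ι) (f : lp (fun _ : ι => E) p) :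
    ‖compEquiv e f‖ = ‖f‖ := by
  simp only [lp.norm_eq_tsum_rpow hp, compEquiv_apply]
  rw [e.tsum_eq (fun i => ‖f i‖ ^ p.toReal)]

theorem adjoint_apply {𝕜 : Type*} [RCLike 𝕜] [DecidableEq ι]
    (T : lp (fun _ : ι => 𝕜) 2 →L[𝕜] lp (fun _ : ι => 𝕜) 2) (g : lp (fun _ : ι => 𝕜) 2)
    (i : ι) : adjoint T g i = ⟪T (lp.single 2 i 1), g⟫_𝕜 := by
  rw [← adjoint_inner_right, lp.inner_single_left, RCLike.inner_apply, map_one,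
    mul_one]

end lp

end

theorem isConjugation_star_compEquiv {ι : Type*} (e : ι ≃ ι) (he : Function.Involutive e) :
    IsConjugation fun f : lp (fun _ : ι => ℂ) 2 => star (lp.compEquiv e f) := by
  refine ⟨fun a x y => ?_, fun x => ?_, fun x => ?_⟩
  · ext i
    simp only [lp.star_apply, lp.compEquiv_apply, lp.coeFn_add, lp.coeFn_smul, Pi.add_apply,
      Pi.smul_apply]
    simp
  · rw [norm_star, lp.norm_compEquiv (by norm_num)]
  · ext i
    simp [lp.star_apply, he i]

def IsShiftTensorBackwardShift (T : lp (fun _ : ℕ × ℕ => ℂ) 2 →L[ℂ] lp (fun _ : ℕ × ℕ => ℂ) 2) :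
    Prop :=
  ∀ (f : lp (fun _ : ℕ × ℕ => ℂ) 2) (p q : ℕ), T f (p, q) = if p = 0 then 0 else f (p - 1, q + 1)

namespace IsShiftTensorBackwardShift

variable {T : lp (fun _ : ℕ × ℕ => ℂ) 2 →L[ℂ] lp (fun _ : ℕ × ℕ => ℂ) 2}

theorem apply_single_zero (hT : IsShiftTensorBackwardShift T) (p : ℕ) :
    T (lp.single 2 (p, 0) 1) = 0 := by
  ext ⟨a, b⟩
  rw [hT]
  split_ifs <;> simp [lp.single_apply]

theorem apply_single_succ (hT : IsShiftTensorBackwardShift T) (p q : ℕ) :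
    T (lp.single 2 (p, q + 1) 1) = lp.single 2 (p + 1, q) 1 := by
  ext ⟨a, b⟩
  rw [hT]
  rcases a with _ | a
  · simp [lp.single_apply]
  · simp [lp.single_apply, Pi.single_apply]

theorem adjoint_apply (hT : IsShiftTensorBackwardShift T) (g : lp (fun _ : ℕ × ℕ => ℂ) 2)
    (p q : ℕ) :
    adjoint T g (p, q) = if q = 0 then 0 else g (p + 1, q - 1) := by
  rw [lp.adjoint_apply]
  rcases q with _ | q
  · simp [hT.apply_single_zero]
  · simp [hT.apply_single_succ, lp.inner_single_left]

end IsShiftTensorBackwardShift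

/-- The operator on `ℓ²(ℕ × ℕ)` realizing `S ⊗ S*` (the tensor product of the unilateral
shift with its adjoint), i.e. `(T f)(0, q) = 0` and `(T f)(p + 1, q) = f (p, q + 1)`,
is a complex symmetric operator. -/
theorem shift_tensor_backward_shift_complex_symmetric
    (T : lp (fun _ : ℕ × ℕ => ℂ) 2 →L[ℂ] lp (fun _ : ℕ × ℕ => ℂ) 2)
    (hT : ∀ (f : lp (fun _ : ℕ × ℕ => ℂ) 2) (p q : ℕ),
      T f (p, q) = if p = 0 then 0 else f (p - 1, q + 1)) :
    ∃ C : lp (fun _ : ℕ × ℕ => ℂ) 2 → lp (fun _ : ℕ × ℕ => ℂ) 2,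
      IsConjugation C ∧ ∀ f, T f = C (adjoint T (C f)) := by
  refine ⟨fun f => star (lp.compEquiv (Equiv.prodComm ℕ ℕ) f),
    isConjugation_star_compEquiv _ Prod.swap_leftInverse, fun f => ?_⟩
  ext ⟨p, q⟩
  simp [hT, lp.star_apply, IsShiftTensorBackwardShift.adjoint_apply hT, apply_ite (starRingEnd ℂ)]
end

section
/- The unilateral shift S on ℓ²(ℕ; ℂ), defined by (S f)(0) = 0 and (S f)(n+1) = f(n), is not a complex symmetric operator: there is no conjugation C on ℓ²(ℕ; ℂ) with S = C ∘ S* ∘ C. -/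
open ContinuousLinearMap

/-- The unilateral shift `S` on `ℓ²(ℕ)` is not a complex symmetric operator. -/
theorem shift_not_complex_symmetric
    (S : lp (fun _ : ℕ => ℂ) 2 →L[ℂ] lp (fun _ : ℕ => ℂ) 2)
    (hS : ∀ f : lp (fun _ : ℕ => ℂ) 2, S f 0 = 0 ∧ ∀ n, S f (n + 1) = f n) :
    ¬ ∃ C : lp (fun _ : ℕ => ℂ) 2 → lp (fun _ : ℕ => ℂ) 2,
      IsConjugation C ∧ ∀ f, S f = C (adjoint S (C f)) := by
  rintro ⟨C, ⟨hlin, hnorm, hinv⟩, hsym⟩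
  -- e₀
  set e : lp (fun _ : ℕ => ℂ) 2 := lp.single 2 0 1 with he
  -- S* e = 0
  have hadj : adjoint S e = 0 := by
    have h : @inner ℂ _ _ (adjoint S e) (adjoint S e) = 0 := by
      rw [adjoint_inner_left]
      rw [he, lp.inner_single_left]
      simp [(hS (adjoint S (lp.single 2 0 1))).1, RCLike.inner_apply]
    exact inner_self_eq_zero.mp h
  -- C 0 = 0
  have hC0 : C 0 = 0 := norm_eq_zero.mp (by rw [hnorm]; simp)
  -- S (C e) = 0
  have hSCe : S (C e) = 0 := by
    rw [hsym (C e), hinv, hadj, hC0]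
  -- S injective on C e
  have hCe0 : C e = 0 := by
    ext n
    have := (hS (C e)).2 n
    rw [hSCe] at this
    simpa using this.symm
  -- contradiction: ‖e‖ = ‖C e‖ = 0 but e 0 = 1
  have : e = 0 := norm_eq_zero.mp (by rw [← hnorm, hCe0, norm_zero])
  have h1 : e 0 = 1 := by rw [he]; exact lp.single_apply_self 2 0 1
  rw [this] at h1
  simp at h1
end

section
/- Every complex symmetric bounded operator T on a complex Hilbert space H admits a polar decomposition with unitary polar factor: there exists a unitary operator U on H such that T = U ∘ |T|, where |T| = (T* T)^{1/2} is the positive square root of T* T. -/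
open ContinuousLinearMap

/-!
Since `P` is self-adjoint with `P² = T* T`, `‖P x‖ = ‖T x‖`, so `P x ↦ T x` extends to a
unitary `V` from `closure (range P)` onto `closure (range T)`. The orthogonal complements of
these subspaces are `ker P = ker T` and `ker T*`. Complex symmetry `T* = C T C` makes `C` a
conjugate-linear isometry of `ker T` onto `ker T*`; composed with a conjugation of the Hilbert
space `ker T` (complex conjugation of coordinates in a Hilbert basis) it gives a unitary
`W : ker T → ker T*`. Then `U = V ⊕ W` is unitary and `U P = T`.
-/

section Normed

variable {𝕜 E F G : Type*} [NormedField 𝕜]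
  [NormedAddCommGroup E] [NormedSpace 𝕜 E]
  [NormedAddCommGroup F] [NormedSpace 𝕜 F]
  [NormedAddCommGroup G] [NormedSpace 𝕜 G]

theorem Submodule.denseRange_inclusion_topologicalClosure (S : Submodule 𝕜 E) :
    DenseRange (Submodule.inclusion S.le_topologicalClosure) :=
  (denseRange_inclusion_iff S.le_topologicalClosure).mpr subset_rfl

namespace ContinuousLinearMap

variable {A : E →L[𝕜] F} {B : E →L[𝕜] G}

theorem ker_eq_of_norm_apply_eq (h : ∀ x, ‖A x‖ = ‖B x‖) : A.ker = B.ker := by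
  ext x
  simp only [LinearMap.mem_ker, coe_coe, ← norm_eq_zero (a := A x), h, norm_eq_zero]

noncomputable def rangeEquivOfNormApplyEq (h : ∀ x, ‖A x‖ = ‖B x‖) : A.range ≃ₗ[𝕜] B.range :=
  (A : E →ₗ[𝕜] F).quotKerEquivRange.symm.trans <|
    (Submodule.quotEquivOfEq _ _ (ker_eq_of_norm_apply_eq h)).trans
      (B : E →ₗ[𝕜] G).quotKerEquivRange

theorem rangeEquivOfNormApplyEq_apply (h : ∀ x, ‖A x‖ = ‖B x‖) (x : E) :
    rangeEquivOfNormApplyEq h ⟨A x, LinearMap.mem_range_self _ x⟩ =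
      ⟨B x, LinearMap.mem_range_self _ x⟩ := by
  have hA := (A : E →ₗ[𝕜] F).quotKerEquivRange_symm_apply_image x (LinearMap.mem_range_self _ x)
  simp only [coe_coe] at hA
  ext1
  simp [rangeEquivOfNormApplyEq, hA]

theorem exists_linearIsometryEquiv_closure_range [CompleteSpace F] [CompleteSpace G]
    (h : ∀ x, ‖A x‖ = ‖B x‖) :
    ∃ V : A.range.topologicalClosure ≃ₗᵢ[𝕜] B.range.topologicalClosure,
      ∀ x, (V ⟨A x, A.range.le_topologicalClosure (LinearMap.mem_range_self _ x)⟩ : G) = B x := by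
  let f := rangeEquivOfNormApplyEq h
  let iA := Submodule.inclusion A.range.le_topologicalClosure
  let iB := Submodule.inclusion B.range.le_topologicalClosure
  have hf : ∀ y, ‖iB (f y)‖ = ‖iA y‖ := by
    rintro ⟨_, x, rfl⟩
    simp [f, iA, iB, rangeEquivOfNormApplyEq_apply, h]
  have hA := A.range.denseRange_inclusion_topologicalClosure
  have hB := B.range.denseRange_inclusion_topologicalClosure
  refine ⟨f.extendOfIsometry iA iB hA hB hf, fun x => ?_⟩
  have hV := f.extendOfIsometry_eq iA iB hA hB hf ⟨A x, LinearMap.mem_range_self _ x⟩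
  rw [rangeEquivOfNormApplyEq_apply] at hV
  exact congrArg Subtype.val hV

end ContinuousLinearMap

end Normed

section InnerProduct

variable {𝕜 E F G : Type*} [RCLike 𝕜]
  [NormedAddCommGroup E] [InnerProductSpace 𝕜 E]
  [NormedAddCommGroup F] [InnerProductSpace 𝕜 F]
  [NormedAddCommGroup G] [InnerProductSpace 𝕜 G]

theorem ContinuousLinearMap.norm_apply_eq_of_adjoint_comp_self_eq [CompleteSpace E]
    [CompleteSpace F] [CompleteSpace G] {A : E →L[𝕜] F} {B : E →L[𝕜] G}
    (h : adjoint A ∘L A = adjoint B ∘L B) (x : E) : ‖A x‖ = ‖B x‖ := by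
  have hsq := A.apply_norm_sq_eq_inner_adjoint_left x
  rw [h, ← B.apply_norm_sq_eq_inner_adjoint_left] at hsq
  exact (pow_left_inj₀ (norm_nonneg _) (norm_nonneg _) two_ne_zero).mp hsq

theorem Submodule.orthogonalProjectionOnto_add_of_mem_orthogonal (K : Submodule 𝕜 E)
    [K.HasOrthogonalProjection] {u v : E} (hu : u ∈ K) (hv : v ∈ Kᗮ) :
    K.orthogonalProjectionOnto (u + v) = ⟨u, hu⟩ := by
  rw [map_add, orthogonalProjectionOnto_mem_subspace_eq_self ⟨u, hu⟩,
    orthogonalProjectionOnto_apply_of_mem_orthogonal hv, add_zero]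

theorem exists_linearIsometryEquiv_extend_of_orthogonal (K L : Submodule 𝕜 E)
    [K.HasOrthogonalProjection] [L.HasOrthogonalProjection]
    (V : K ≃ₗᵢ[𝕜] L) (W : Kᗮ ≃ₗᵢ[𝕜] Lᗮ) :
    ∃ U : E ≃ₗᵢ[𝕜] E, ∀ x : K, U x = V x := by
  let A : E →L[𝕜] E := L.subtypeL ∘L (V : K →L[𝕜] L) ∘L K.orthogonalProjectionOnto +
    Lᗮ.subtypeL ∘L (W : Kᗮ →L[𝕜] Lᗮ) ∘L Kᗮ.orthogonalProjectionOnto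
  have hA : ∀ x, A x = V (K.orthogonalProjectionOnto x) + W (Kᗮ.orthogonalProjectionOnto x) :=
    fun x => rfl
  have hnorm : ∀ x, ‖A x‖ = ‖x‖ := by
    intro x
    have hpyth := norm_add_sq_eq_norm_sq_add_norm_sq_of_inner_eq_zero
      (V (K.orthogonalProjectionOnto x) : E) (W (Kᗮ.orthogonalProjectionOnto x))
      (L.inner_right_of_mem_orthogonal (V _).2 (W _).2)
    rw [← sq_eq_sq₀ (norm_nonneg _) (norm_nonneg _), hA, sq, hpyth,
      K.norm_sq_eq_add_norm_sq_projection x, ← V.norm_map, ← W.norm_map, sq, sq]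
    rfl
  have hsurj : Function.Surjective A := by
    intro y
    set u := V.symm (L.orthogonalProjectionOnto y)
    set v := W.symm (Lᗮ.orthogonalProjectionOnto y)
    have hu := K.orthogonalProjectionOnto_add_of_mem_orthogonal u.2 v.2
    have hv :=
      Kᗮ.orthogonalProjectionOnto_add_of_mem_orthogonal v.2 (K.le_orthogonal_orthogonal u.2)
    refine ⟨u + v, ?_⟩
    rw [add_comm (v : E)] at hv
    rw [hA, hu, hv]
    simp [u, v]
  refine ⟨LinearIsometryEquiv.ofSurjective ⟨(A : E →ₗ[𝕜] E), hnorm⟩ hsurj, fun x => ?_⟩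
  simp [hA]

end InnerProduct

namespace IsConjugation

variable {H : Type*} [NormedAddCommGroup H] [InnerProductSpace ℂ H] {C : H → H}

def toLinearIsometryEquiv (hC : IsConjugation C) : H ≃ₗᵢ⋆[ℂ] H where
  toFun := C
  invFun := C
  map_add' x y := by simpa using hC.1 1 x y
  map_smul' a x := by simpa [show C 0 = 0 by simpa using hC.1 1 0 0] using hC.1 a x 0
  left_inv := hC.2.2
  right_inv := hC.2.2
  norm_map' := hC.2.1

@[simp]
theorem coe_toLinearIsometryEquiv (hC : IsConjugation C) : ⇑hC.toLinearIsometryEquiv = C := rfl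

theorem ker_adjoint_eq_map_ker [CompleteSpace H] (hC : IsConjugation C) {T : H →L[ℂ] H}
    (hCT : ∀ x, T x = C (adjoint T (C x))) :
    (adjoint T).ker = T.ker.map (hC.toLinearIsometryEquiv : H →ₗ⋆[ℂ] H) := by
  ext y
  rw [Submodule.mem_map_equiv]
  change adjoint T y = 0 ↔ T (hC.toLinearIsometryEquiv y) = 0
  rw [coe_toLinearIsometryEquiv, hCT, hC.2.2, ← coe_toLinearIsometryEquiv hC]
  exact (map_eq_zero_iff _ hC.toLinearIsometryEquiv.injective).symm

end IsConjugation

theorem nonempty_conjLinearIsometryEquiv (E : Type*) [NormedAddCommGroup E]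
    [InnerProductSpace ℂ E] [CompleteSpace E] : Nonempty (E ≃ₗᵢ⋆[ℂ] E) := by
  obtain ⟨ι, b, -⟩ := exists_hilbertBasis ℂ E
  exact ⟨b.repr.trans ((starₗᵢ ℂ).trans b.repr.symm)⟩

theorem LinearIsometryEquiv.nonempty_linearIsometryEquiv_submoduleMap {E F : Type*}
    [NormedAddCommGroup E] [InnerProductSpace ℂ E] [NormedAddCommGroup F] [InnerProductSpace ℂ F]
    (e : E ≃ₗᵢ⋆[ℂ] F) (K : Submodule ℂ E) [CompleteSpace K] :
    Nonempty (K ≃ₗᵢ[ℂ] K.map (e : E →ₗ⋆[ℂ] F)) := by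
  obtain ⟨J⟩ := nonempty_conjLinearIsometryEquiv K
  exact ⟨J.trans (e.submoduleMap K)⟩

/-- `|T|` enters as any positive `P` with `P² = T* T`; such a `P` is unique. -/
theorem complex_symmetric_polar_decomposition_unitary
    {H : Type*} [NormedAddCommGroup H] [InnerProductSpace ℂ H] [CompleteSpace H]
    (T : H →L[ℂ] H)
    (hT : ∃ C : H → H, IsConjugation C ∧ ∀ x, T x = C (adjoint T (C x)))
    (P : H →L[ℂ] H) (hP : P.IsPositive) (hP2 : P ∘L P = adjoint T ∘L T) :
    ∃ U : H →L[ℂ] H, (adjoint U ∘L U = 1 ∧ U ∘L adjoint U = 1) ∧ T = U ∘L P := by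
  obtain ⟨C, hC, hCT⟩ := hT
  have hPT : ∀ x, ‖P x‖ = ‖T x‖ :=
    norm_apply_eq_of_adjoint_comp_self_eq (by rw [hP.isSelfAdjoint.adjoint_eq, hP2])
  obtain ⟨V, hV⟩ := exists_linearIsometryEquiv_closure_range hPT
  have hK : P.range.topologicalClosureᗮ = T.ker := by
    rw [Submodule.orthogonal_closure, orthogonal_range, hP.isSelfAdjoint.adjoint_eq,
      ker_eq_of_norm_apply_eq hPT]
  have hL : T.range.topologicalClosureᗮ =
      T.ker.map (hC.toLinearIsometryEquiv : H →ₗ⋆[ℂ] H) := by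
    rw [Submodule.orthogonal_closure, orthogonal_range, hC.ker_adjoint_eq_map_ker hCT]
  obtain ⟨W⟩ := hC.toLinearIsometryEquiv.nonempty_linearIsometryEquiv_submoduleMap T.ker
  obtain ⟨U, hU⟩ := exists_linearIsometryEquiv_extend_of_orthogonal _ _ V
    ((LinearIsometryEquiv.ofEq _ _ hK).trans (W.trans (LinearIsometryEquiv.ofEq _ _ hL.symm)))
  refine ⟨U, Unitary.mem_iff.mp (Unitary.linearIsometryEquiv.symm U).2, ?_⟩
  ext x
  exact ((hU _).trans (hV x)).symm
end
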